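/- arXiv:1601.02969 — 9 statements merged into one kernel-verified Lean document; each statement's English description precedes it below -/
import Mathlib

section
/- Let C be a symmetric 6×6 real matrix. Let J₁ = I, J₂ = diag(1,1,1,−1,−1,1), J₃ = diag(1,1,1,−1,1,−1), J₄ = diag(1,1,1,1,−1,−1). Then the Gazis orthotropic average G_ortho(C) := (1/4)·Σ_{k=1}^{4} J_k·C·J_kᵀ is the matrix M with M i j = C i j whenever i = j or both i, j lie in {1,2,3}, and M i j = 0 otherwise. In particular, G_ortho(C) is obtained from C by setting to zero exactly the entries that vanish for an orthotropic tensor in its natural coordinate system. -/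
open Matrix

private lemma vec6_three (a b c d e f : ℝ) : (![a,b,c,d,e,f]) 3 = d := rfl
private lemma vec6_four (a b c d e f : ℝ) : (![a,b,c,d,e,f]) 4 = e := rfl
private lemma vec6_five (a b c d e f : ℝ) : (![a,b,c,d,e,f]) 5 = f := rfl

/-- The Gazis orthotropic average `G_ortho(C) = (1/4)Σₖ Jₖ·C·Jₖᵀ`
keeps the diagonal entries and the entries with both indices in `{1,2,3}`
(Lean indices `{0,1,2}`), and zeroes the remaining entries. -/
theorem gazis_ortho_average_eq (C : Matrix (Fin 6) (Fin 6) ℝ) (hC : C.IsSymm) :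
    let J1 : Matrix (Fin 6) (Fin 6) ℝ := 1
    let J2 : Matrix (Fin 6) (Fin 6) ℝ := Matrix.diagonal ![1, 1, 1, -1, -1, 1]
    let J3 : Matrix (Fin 6) (Fin 6) ℝ := Matrix.diagonal ![1, 1, 1, -1, 1, -1]
    let J4 : Matrix (Fin 6) (Fin 6) ℝ := Matrix.diagonal ![1, 1, 1, 1, -1, -1]
    ∀ i j : Fin 6,
      ((4 : ℝ)⁻¹ • (J1 * C * J1ᵀ + J2 * C * J2ᵀ + J3 * C * J3ᵀ + J4 * C * J4ᵀ)) i j =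
        if (i = j ∨ ((i = 0 ∨ i = 1 ∨ i = 2) ∧ (j = 0 ∨ j = 1 ∨ j = 2))) then C i j else 0 := by
  intro J1 J2 J3 J4 i j
  simp only [J1, J2, J3, J4, Matrix.transpose_one, Matrix.diagonal_transpose, Matrix.one_mul,
    Matrix.mul_one, Matrix.diagonal_mul, Matrix.mul_diagonal, Matrix.add_apply,
    Matrix.smul_apply, smul_eq_mul]
  fin_cases i <;> fin_cases j <;>
    simp [vec6_three, vec6_four, vec6_five] <;> ring
end

section
/- Let C be a symmetric 6×6 real matrix and let G_ortho(C) = (1/4)·Σ_{k=1}^{4} J_k·C·J_k with J₁ = I, J₂ = diag(1,1,1,−1,−1,1), J₃ = diag(1,1,1,−1,1,−1), J₄ = diag(1,1,1,1,−1,−1). Then G_ortho(C) = C if and only if C has the orthotropic pattern, i.e. C i j = 0 unless i = j or both i, j lie in {1,2,3}. -/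
open Matrix

/-- `G_ortho(C) = C` if and only if `C` has the orthotropic pattern,
i.e. `C i j = 0` unless `i = j` or both `i, j` lie in `{1,2,3}` (Lean `{0,1,2}`). -/
theorem gazis_ortho_fixed_iff (C : Matrix (Fin 6) (Fin 6) ℝ) (hC : C.IsSymm) :
    let J1 : Matrix (Fin 6) (Fin 6) ℝ := 1
    let J2 : Matrix (Fin 6) (Fin 6) ℝ := Matrix.diagonal ![1, 1, 1, -1, -1, 1]
    let J3 : Matrix (Fin 6) (Fin 6) ℝ := Matrix.diagonal ![1, 1, 1, -1, 1, -1]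
    let J4 : Matrix (Fin 6) (Fin 6) ℝ := Matrix.diagonal ![1, 1, 1, 1, -1, -1]
    ((4 : ℝ)⁻¹ • (J1 * C * J1 + J2 * C * J2 + J3 * C * J3 + J4 * C * J4) = C ↔
      ∀ i j : Fin 6,
        ¬(i = j ∨ ((i = 0 ∨ i = 1 ∨ i = 2) ∧ (j = 0 ∨ j = 1 ∨ j = 2))) → C i j = 0) := by
  intro J1 J2 J3 J4
  constructor
  · intro h i j hij
    have h' := congrFun (congrFun h i) j
    simp only [J1, J2, J3, J4, Matrix.smul_apply, Matrix.add_apply, Matrix.one_mul,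
      Matrix.mul_one, Matrix.mul_diagonal, Matrix.diagonal_mul, smul_eq_mul] at h'
    fin_cases i <;> fin_cases j <;> norm_num at h' ⊢ <;> simp_all
  · intro h
    ext i j
    simp only [J1, J2, J3, J4, Matrix.smul_apply, Matrix.add_apply, Matrix.one_mul,
      Matrix.mul_one, Matrix.mul_diagonal, Matrix.diagonal_mul, smul_eq_mul]
    by_cases hp : (i = j ∨ ((i = 0 ∨ i = 1 ∨ i = 2) ∧ (j = 0 ∨ j = 1 ∨ j = 2)))
    · fin_cases i <;> fin_cases j <;> first
        | (exfalso; revert hp; decide)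
        | (norm_num; ring)
    · rw [h i j hp]; norm_num
end

section
/- For every 6×6 real matrix C, G_ortho(G_mono(C)) = G_ortho(C) and G_mono(G_ortho(C)) = G_ortho(C), where G_mono(C) = (C + J₂ C J₂)/2 and G_ortho(C) = (1/4)·Σ_{k=1}^{4} J_k C J_k with J₁ = I, J₂ = diag(1,1,1,−1,−1,1), J₃ = diag(1,1,1,−1,1,−1), J₄ = diag(1,1,1,1,−1,−1). That is, performing the Gazis average directly to orthotropic symmetry is the same as first averaging to monoclinic symmetry and then to orthotropic symmetry. -/
open Matrix

/-- `G_ortho ∘ G_mono = G_ortho` and `G_mono ∘ G_ortho = G_ortho`: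
the Gazis average directly to orthotropic symmetry equals first averaging to
monoclinic symmetry and then to orthotropic symmetry. -/
theorem gazis_mono_ortho_composition (C : Matrix (Fin 6) (Fin 6) ℝ) :
    let J1 : Matrix (Fin 6) (Fin 6) ℝ := 1
    let J2 : Matrix (Fin 6) (Fin 6) ℝ := Matrix.diagonal ![1, 1, 1, -1, -1, 1]
    let J3 : Matrix (Fin 6) (Fin 6) ℝ := Matrix.diagonal ![1, 1, 1, -1, 1, -1]
    let J4 : Matrix (Fin 6) (Fin 6) ℝ := Matrix.diagonal ![1, 1, 1, 1, -1, -1]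
    let Gm : Matrix (Fin 6) (Fin 6) ℝ → Matrix (Fin 6) (Fin 6) ℝ :=
      fun X => (2 : ℝ)⁻¹ • (X + J2 * X * J2)
    let Go : Matrix (Fin 6) (Fin 6) ℝ → Matrix (Fin 6) (Fin 6) ℝ :=
      fun X => (4 : ℝ)⁻¹ • (J1 * X * J1 + J2 * X * J2 + J3 * X * J3 + J4 * X * J4)
    Go (Gm C) = Go C ∧ Gm (Go C) = Go C := by
  intro J1 J2 J3 J4 Gm Go
  have h22 : J2 * J2 = 1 := by
    simp only [J2, Matrix.diagonal_mul_diagonal]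
    have : (fun i => (![1,1,1,-1,-1,1] : Fin 6 → ℝ) i * ![1,1,1,-1,-1,1] i)
        = (fun _ => (1:ℝ)) := by funext i; fin_cases i <;> norm_num
    rw [this, Matrix.diagonal_one]
  have h23 : J2 * J3 = J4 := by
    simp only [J2, J3, J4, Matrix.diagonal_mul_diagonal]
    have : (fun i => (![1,1,1,-1,-1,1] : Fin 6 → ℝ) i * ![1,1,1,-1,1,-1] i)
        = ![1,1,1,1,-1,-1] := by funext i; fin_cases i <;> norm_num
    rw [this]
  have h32 : J3 * J2 = J4 := by
    simp only [J2, J3, J4, Matrix.diagonal_mul_diagonal]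
    have : (fun i => (![1,1,1,-1,1,-1] : Fin 6 → ℝ) i * ![1,1,1,-1,-1,1] i)
        = ![1,1,1,1,-1,-1] := by funext i; fin_cases i <;> norm_num
    rw [this]
  have h24 : J2 * J4 = J3 := by
    simp only [J2, J3, J4, Matrix.diagonal_mul_diagonal]
    have : (fun i => (![1,1,1,-1,-1,1] : Fin 6 → ℝ) i * ![1,1,1,1,-1,-1] i)
        = ![1,1,1,-1,1,-1] := by funext i; fin_cases i <;> norm_num
    rw [this]
  have h42 : J4 * J2 = J3 := by
    simp only [J2, J3, J4, Matrix.diagonal_mul_diagonal]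
    have : (fun i => (![1,1,1,1,-1,-1] : Fin 6 → ℝ) i * ![1,1,1,-1,-1,1] i)
        = ![1,1,1,-1,1,-1] := by funext i; fin_cases i <;> norm_num
    rw [this]
  have key2 : J2 * (J2 * C * J2) * J2 = C := by
    rw [show J2 * (J2 * C * J2) * J2 = (J2 * J2) * C * (J2 * J2) by noncomm_ring, h22]
    simp
  have key3 : J3 * (J2 * C * J2) * J3 = J4 * C * J4 := by
    rw [show J3 * (J2 * C * J2) * J3 = (J3 * J2) * C * (J2 * J3) by noncomm_ring, h32, h23]
  have key4 : J4 * (J2 * C * J2) * J4 = J3 * C * J3 := by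
    rw [show J4 * (J2 * C * J2) * J4 = (J4 * J2) * C * (J2 * J4) by noncomm_ring, h42, h24]
  constructor
  · show (4:ℝ)⁻¹ • (1 * ((2:ℝ)⁻¹ • (C + J2 * C * J2)) * 1
      + J2 * ((2:ℝ)⁻¹ • (C + J2 * C * J2)) * J2
      + J3 * ((2:ℝ)⁻¹ • (C + J2 * C * J2)) * J3
      + J4 * ((2:ℝ)⁻¹ • (C + J2 * C * J2)) * J4)
      = (4:ℝ)⁻¹ • (1 * C * 1 + J2 * C * J2 + J3 * C * J3 + J4 * C * J4)
    simp only [Matrix.one_mul, Matrix.mul_one, smul_add, mul_add, add_mul,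
      smul_mul_assoc, mul_smul_comm, key2, key3, key4]
    module
  · show (2:ℝ)⁻¹ • ((4:ℝ)⁻¹ • (1 * C * 1 + J2 * C * J2 + J3 * C * J3 + J4 * C * J4)
      + J2 * ((4:ℝ)⁻¹ • (1 * C * 1 + J2 * C * J2 + J3 * C * J3 + J4 * C * J4)) * J2)
      = (4:ℝ)⁻¹ • (1 * C * 1 + J2 * C * J2 + J3 * C * J3 + J4 * C * J4)
    have k3 : J2 * (J3 * C * J3) * J2 = J4 * C * J4 := by
      rw [show J2 * (J3 * C * J3) * J2 = (J2 * J3) * C * (J3 * J2) by noncomm_ring, h23, h32]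
    have k4 : J2 * (J4 * C * J4) * J2 = J3 * C * J3 := by
      rw [show J2 * (J4 * C * J4) * J2 = (J2 * J4) * C * (J4 * J2) by noncomm_ring, h24, h42]
    simp only [Matrix.one_mul, Matrix.mul_one, smul_add, mul_add, add_mul,
      smul_mul_assoc, mul_smul_comm, key2, k3, k4]
    module
end

section
/- Let C be a symmetric 6×6 real matrix with the orthotropic pattern (C i j = 0 unless i = j or both i, j ∈ {1,2,3}). Let Q be the 6×6 matrix with rows Q₁ = e₂, Q₂ = e₁, Q₃ = e₃, Q₄ = e₅, Q₅ = −e₄, Q₆ = −e₆ (the Kelvin-notation image of the rotation by π/2 about the x₃-axis). Then the tetragonal Gazis average G_tetra(C) := (C + Q·C·Qᵀ)/2 is the symmetric matrix M with M₁₁ = M₂₂ = (C₁₁+C₂₂)/2, M₁₂ = C₁₂, M₁₃ = M₂₃ = (C₁₃+C₂₃)/2, M₃₃ = C₃₃, M₄₄ = M₅₅ = (C₄₄+C₅₅)/2, M₆₆ = C₆₆, and all other entries zero. -/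
open Matrix

lemma cons_val_five' {α : Type*} (x : α) (u : Fin 5 → α) :
    Matrix.vecCons x u 5 = u 4 := rfl

set_option maxHeartbeats 2000000 in
/-- For a symmetric orthotropic-pattern `C`, the tetragonal Gazis
average `(C + Q·C·Qᵀ)/2`, where `Q` is the Kelvin image of the rotation by π/2
about `x₃` (rows `e₂, e₁, e₃, e₅, −e₄, −e₆`), equals the displayed tetragonal
matrix (indices shifted to `0..5` in Lean). -/
theorem gazis_tetra_of_ortho (C : Matrix (Fin 6) (Fin 6) ℝ) (hC : C.IsSymm)
    (hOrtho : ∀ i j : Fin 6,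
      ¬(i = j ∨ ((i = 0 ∨ i = 1 ∨ i = 2) ∧ (j = 0 ∨ j = 1 ∨ j = 2))) → C i j = 0) :
    let Q : Matrix (Fin 6) (Fin 6) ℝ :=
      !![0, 1, 0, 0, 0, 0;
         1, 0, 0, 0, 0, 0;
         0, 0, 1, 0, 0, 0;
         0, 0, 0, 0, 1, 0;
         0, 0, 0, -1, 0, 0;
         0, 0, 0, 0, 0, -1]
    (2 : ℝ)⁻¹ • (C + Q * C * Qᵀ) =
      !![(C 0 0 + C 1 1) / 2, C 0 1, (C 0 2 + C 1 2) / 2, 0, 0, 0;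
         C 0 1, (C 0 0 + C 1 1) / 2, (C 0 2 + C 1 2) / 2, 0, 0, 0;
         (C 0 2 + C 1 2) / 2, (C 0 2 + C 1 2) / 2, C 2 2, 0, 0, 0;
         0, 0, 0, (C 3 3 + C 4 4) / 2, 0, 0;
         0, 0, 0, 0, (C 3 3 + C 4 4) / 2, 0;
         0, 0, 0, 0, 0, C 5 5] := by
  intro Q
  have hs : ∀ i j : Fin 6, C j i = C i j := fun i j => hC.apply i j
  have hz : ∀ i j : Fin 6,
      ¬(i = j ∨ ((i = 0 ∨ i = 1 ∨ i = 2) ∧ (j = 0 ∨ j = 1 ∨ j = 2))) → C i j = 0 := hOrtho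
  have h03 : C 0 3 = 0 := hz 0 3 (by decide)
  have h04 : C 0 4 = 0 := hz 0 4 (by decide)
  have h05 : C 0 5 = 0 := hz 0 5 (by decide)
  have h13 : C 1 3 = 0 := hz 1 3 (by decide)
  have h14 : C 1 4 = 0 := hz 1 4 (by decide)
  have h15 : C 1 5 = 0 := hz 1 5 (by decide)
  have h23 : C 2 3 = 0 := hz 2 3 (by decide)
  have h24 : C 2 4 = 0 := hz 2 4 (by decide)
  have h25 : C 2 5 = 0 := hz 2 5 (by decide)
  have h34 : C 3 4 = 0 := hz 3 4 (by decide)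
  have h35 : C 3 5 = 0 := hz 3 5 (by decide)
  have h45 : C 4 5 = 0 := hz 4 5 (by decide)
  have h30 : C 3 0 = 0 := (hs 0 3).trans h03
  have h40 : C 4 0 = 0 := (hs 0 4).trans h04
  have h50 : C 5 0 = 0 := (hs 0 5).trans h05
  have h31 : C 3 1 = 0 := (hs 1 3).trans h13
  have h41 : C 4 1 = 0 := (hs 1 4).trans h14
  have h51 : C 5 1 = 0 := (hs 1 5).trans h15
  have h32 : C 3 2 = 0 := (hs 2 3).trans h23
  have h42 : C 4 2 = 0 := (hs 2 4).trans h24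
  have h52 : C 5 2 = 0 := (hs 2 5).trans h25
  have h43 : C 4 3 = 0 := (hs 3 4).trans h34
  have h53 : C 5 3 = 0 := (hs 3 5).trans h35
  have h54 : C 5 4 = 0 := (hs 4 5).trans h45
  have h10 : C 1 0 = C 0 1 := hs 0 1
  have h20 : C 2 0 = C 0 2 := hs 0 2
  have h21 : C 2 1 = C 1 2 := hs 1 2
  ext i j
  rw [Matrix.smul_apply, Matrix.add_apply]
  simp only [Matrix.mul_apply, Matrix.transpose_apply]
  fin_cases i <;> fin_cases j <;>
    simp [Q, Fin.sum_univ_six, cons_val_five', h03, h04, h05, h13, h14, h15,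
      h23, h24, h25, h34, h35, h45, h30, h40, h50, h31, h41, h51, h32, h42, h52,
      h43, h53, h54, h10, h20, h21] <;> first | rfl | ring
end

section
/- Let C be a symmetric 6×6 real matrix and G_mono(C) = (C + J·C·J)/2 with J = diag(1,1,1,−1,−1,1). Then G_mono(C) has the monoclinic pattern, and for every 6×6 real matrix M with the monoclinic pattern, ‖C − G_mono(C)‖_F ≤ ‖C − M‖_F, where ‖·‖_F is the Frobenius norm. That is, G_mono(C) is the orthogonal projection of C, in the Frobenius sense, onto the linear space of matrices with the monoclinic pattern. -/
open Matrix

/-- The Frobenius norm of a `6×6` real matrix. -/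
noncomputable def frobNorm (X : Matrix (Fin 6) (Fin 6) ℝ) : ℝ :=
  Real.sqrt (∑ i : Fin 6, ∑ j : Fin 6, (X i j) ^ 2)

/-- `G_mono(C)` has the monoclinic pattern and is the closest
monoclinic-pattern matrix to `C` in the Frobenius norm (the orthogonal
projection onto the monoclinic-pattern subspace). Indices `{4,5}` of the paper
are `{3,4}` in Lean's `0..5` indexing. -/
theorem gazis_mono_is_frobenius_projection (C : Matrix (Fin 6) (Fin 6) ℝ)
    (hC : C.IsSymm) :
    let J : Matrix (Fin 6) (Fin 6) ℝ := Matrix.diagonal ![1, 1, 1, -1, -1, 1]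
    let G : Matrix (Fin 6) (Fin 6) ℝ := (2 : ℝ)⁻¹ • (C + J * C * J)
    (∀ i j : Fin 6, ¬((i = 3 ∨ i = 4) ↔ (j = 3 ∨ j = 4)) → G i j = 0) ∧
    ∀ M : Matrix (Fin 6) (Fin 6) ℝ,
      (∀ i j : Fin 6, ¬((i = 3 ∨ i = 4) ↔ (j = 3 ∨ j = 4)) → M i j = 0) →
      frobNorm (C - G) ≤ frobNorm (C - M) := by
  intro J G
  have hd : ∀ i : Fin 6, (![1, 1, 1, -1, -1, 1] : Fin 6 → ℝ) i
      = if i = 3 ∨ i = 4 then -1 else 1 := by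
    intro i; fin_cases i <;> simp <;> rfl
  have hG : ∀ i j : Fin 6,
      G i j = if ((i = 3 ∨ i = 4) ↔ (j = 3 ∨ j = 4)) then C i j else 0 := by
    intro i j
    have hJ : (J * C * J) i j
        = (![1, 1, 1, -1, -1, 1] : Fin 6 → ℝ) i * C i j
          * (![1, 1, 1, -1, -1, 1] : Fin 6 → ℝ) j := by
      simp [J, Matrix.mul_diagonal, Matrix.diagonal_mul, mul_comm, mul_assoc]
    have : G i j = (2 : ℝ)⁻¹ * (C i j + (J * C * J) i j) := by
      simp [G, Matrix.add_apply, mul_add]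
    rw [this, hJ, hd i, hd j]
    by_cases hi : i = 3 ∨ i = 4 <;> by_cases hj : j = 3 ∨ j = 4 <;>
      simp [hi, hj] <;> ring
  constructor
  · intro i j h
    rw [hG i j, if_neg h]
  · intro M hM
    apply Real.sqrt_le_sqrt
    apply Finset.sum_le_sum
    intro i _
    apply Finset.sum_le_sum
    intro j _
    by_cases h : (i = 3 ∨ i = 4) ↔ (j = 3 ∨ j = 4)
    · have : (C - G) i j = 0 := by
        simp [Matrix.sub_apply, hG i j, if_pos h]
      rw [this]
      simpa using sq_nonneg ((C - M) i j)
    · have h1 : (C - G) i j = C i j := by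
        simp [Matrix.sub_apply, hG i j, if_neg h]
      have h2 : (C - M) i j = C i j := by
        simp [Matrix.sub_apply, hM i j h]
      rw [h1, h2]
end

section
/- Let C be a symmetric 6×6 real matrix and G_ortho(C) = (1/4)·Σ_{k=1}^{4} J_k·C·J_k with J₁ = I, J₂ = diag(1,1,1,−1,−1,1), J₃ = diag(1,1,1,−1,1,−1), J₄ = diag(1,1,1,1,−1,−1). Then G_ortho(C) has the orthotropic pattern, and for every 6×6 real matrix M with the orthotropic pattern, ‖C − G_ortho(C)‖_F ≤ ‖C − M‖_F, where ‖·‖_F is the Frobenius norm. That is, G_ortho(C) is the orthogonal projection of C, in the Frobenius sense, onto the linear space of matrices with the orthotropic pattern. -/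
open Matrix

/-- `G_ortho(C)` has the orthotropic pattern and is the closest
orthotropic-pattern matrix to `C` in the Frobenius norm (the orthogonal
projection onto the orthotropic-pattern subspace). Indices `{1,2,3}` of the
paper are `{0,1,2}` in Lean's `0..5` indexing. -/
theorem gazis_ortho_is_frobenius_projection (C : Matrix (Fin 6) (Fin 6) ℝ)
    (hC : C.IsSymm) :
    let J1 : Matrix (Fin 6) (Fin 6) ℝ := 1
    let J2 : Matrix (Fin 6) (Fin 6) ℝ := Matrix.diagonal ![1, 1, 1, -1, -1, 1]
    let J3 : Matrix (Fin 6) (Fin 6) ℝ := Matrix.diagonal ![1, 1, 1, -1, 1, -1]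
    let J4 : Matrix (Fin 6) (Fin 6) ℝ := Matrix.diagonal ![1, 1, 1, 1, -1, -1]
    let G : Matrix (Fin 6) (Fin 6) ℝ :=
      (4 : ℝ)⁻¹ • (J1 * C * J1 + J2 * C * J2 + J3 * C * J3 + J4 * C * J4)
    (∀ i j : Fin 6, ¬(i = j ∨ ((i = 0 ∨ i = 1 ∨ i = 2) ∧ (j = 0 ∨ j = 1 ∨ j = 2))) →
        G i j = 0) ∧
    ∀ M : Matrix (Fin 6) (Fin 6) ℝ,
      (∀ i j : Fin 6, ¬(i = j ∨ ((i = 0 ∨ i = 1 ∨ i = 2) ∧ (j = 0 ∨ j = 1 ∨ j = 2))) →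
        M i j = 0) →
      frobNorm (C - G) ≤ frobNorm (C - M) := by
  intro J1 J2 J3 J4 G
  -- entrywise description of G
  have hG : ∀ i j : Fin 6,
      G i j = if (i = j ∨ ((i = 0 ∨ i = 1 ∨ i = 2) ∧ (j = 0 ∨ j = 1 ∨ j = 2)))
        then C i j else 0 := by
    intro i j
    have h : G i j = (4 : ℝ)⁻¹ *
        (C i j
          + (![1, 1, 1, -1, -1, 1] : Fin 6 → ℝ) i * C i j * ![1, 1, 1, -1, -1, 1] j
          + (![1, 1, 1, -1, 1, -1] : Fin 6 → ℝ) i * C i j * ![1, 1, 1, -1, 1, -1] j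
          + (![1, 1, 1, 1, -1, -1] : Fin 6 → ℝ) i * C i j * ![1, 1, 1, 1, -1, -1] j) := by
      simp only [G, J1, J2, J3, J4, Matrix.smul_apply, Matrix.add_apply,
        Matrix.one_mul, Matrix.mul_one, Matrix.diagonal_mul, Matrix.mul_diagonal,
        smul_eq_mul]
      try ring
    rw [h]
    fin_cases i <;> fin_cases j <;> norm_num [Fin.ext_iff] <;> try ring
  have hoff : ∀ i j : Fin 6,
      ¬(i = j ∨ ((i = 0 ∨ i = 1 ∨ i = 2) ∧ (j = 0 ∨ j = 1 ∨ j = 2))) → G i j = 0 := by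
    intro i j h; rw [hG i j, if_neg h]
  refine ⟨hoff, ?_⟩
  intro M hM
  apply Real.sqrt_le_sqrt
  apply Finset.sum_le_sum
  intro i _
  apply Finset.sum_le_sum
  intro j _
  by_cases h : (i = j ∨ ((i = 0 ∨ i = 1 ∨ i = 2) ∧ (j = 0 ∨ j = 1 ∨ j = 2)))
  · have : (C - G) i j = 0 := by
      simp [Matrix.sub_apply, hG i j, if_pos h]
    rw [this]
    simpa using sq_nonneg ((C - M) i j)
  · have h1 : (C - G) i j = C i j := by
      simp [Matrix.sub_apply, hG i j, if_neg h]
    have h2 : (C - M) i j = C i j := by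
      simp [Matrix.sub_apply, hM i j h]
    rw [h1, h2]
end

section
/- Let μ be a probability measure on a measurable space Ω and denote f̄ = ∫_Ω f dμ. Let a, b : Ω → ℝ (the layer parameters c₂₃₂₃ and c₁₃₁₃) be measurable with ε ≤ a ≤ M and ε ≤ b ≤ M for some constants 0 < ε ≤ M, and suppose the layer parameter c₂₃₁₃ is identically zero, so that D := 2(a·b − 0²) = 2ab. Set D₂ := (b/D)‾ · (a/D)‾ − ((0/D)‾)². Then the Backus equivalent-medium parameters satisfy (b/D)‾ / (2·D₂) = ((1/b)‾)⁻¹ and (a/D)‾ / (2·D₂) = ((1/a)‾)⁻¹. Hence, for monoclinic layers with c₂₃₁₃ ≡ 0 (and c₃₃₁₂ ≡ 0), the Backus average and the Gazis (orthotropic) average commute. -/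
open MeasureTheory

/- With `c₂₃₁₃ = 0` the Backus weights decouple: `b / D = 1 / (2a)` and `a / D = 1 / (2b)`, so
`D₂ = (1/a)‾ (1/b)‾ / 4` and both quotients collapse to harmonic means. The only analytic input
is `(1/a)‾ > 0` (and likewise for `b`), which keeps the cancellation away from Lean's `x / 0 = 0`. -/

section

variable {Ω : Type*} [MeasurableSpace Ω] {μ : Measure Ω} {a b : Ω → ℝ} {ε : ℝ}

lemma integrable_one_div_of_le [IsFiniteMeasure μ] (ha : Measurable a) (hε : 0 < ε)
    (hle : ∀ ω, ε ≤ a ω) : Integrable (fun ω => 1 / a ω) μ := by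
  refine Integrable.of_bound (measurable_const.div ha).aestronglyMeasurable (1 / ε) (ae_of_all _ fun ω => ?_)
  have hpos : 0 < a ω := hε.trans_le (hle ω)
  rw [Real.norm_of_nonneg (one_div_pos.2 hpos).le]
  exact one_div_le_one_div_of_le hε (hle ω)

lemma integral_one_div_pos_of_le [IsFiniteMeasure μ] [NeZero μ] (ha : Measurable a)
    (hε : 0 < ε) (hle : ∀ ω, ε ≤ a ω) : 0 < ∫ ω, 1 / a ω ∂μ := by
  have hpos : ∀ ω, 0 < 1 / a ω := fun ω => one_div_pos.2 (hε.trans_le (hle ω))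
  rw [integral_pos_iff_support_of_nonneg (fun ω => (hpos ω).le)
    (integrable_one_div_of_le ha hε hle), Function.support_eq_univ fun ω => (hpos ω).ne']
  exact Measure.measure_univ_pos.2 (NeZero.ne μ)

lemma integral_div_two_mul_mul_eq (hb : ∀ ω, b ω ≠ 0) :
    ∫ ω, b ω / (2 * (a ω * b ω)) ∂μ = (∫ ω, 1 / a ω ∂μ) / 2 := by
  rw [← integral_div]
  congr with ω
  field_simp [hb ω]

end

lemma div_two_div_two_mul_div_two_mul_div_two {A B : ℝ} (hA : A ≠ 0) :
    A / 2 / (2 * (A / 2 * (B / 2))) = B⁻¹ := by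
  field_simp

theorem backus_gazis_commute_of_c2313_zero_general
    {Ω : Type*} [MeasurableSpace Ω] (μ : Measure Ω) [IsProbabilityMeasure μ]
    (a b : Ω → ℝ) (ha : Measurable a) (hb : Measurable b)
    (ε M : ℝ) (hε : 0 < ε)
    (ha' : ∀ ω, ε ≤ a ω ∧ a ω ≤ M) (hb' : ∀ ω, ε ≤ b ω ∧ b ω ≤ M) :
    let D : Ω → ℝ := fun ω => 2 * (a ω * b ω - 0 ^ 2)
    let D2 : ℝ := (∫ ω, b ω / D ω ∂μ) * (∫ ω, a ω / D ω ∂μ) -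
      (∫ ω, (0 : ℝ) / D ω ∂μ) ^ 2
    (∫ ω, b ω / D ω ∂μ) / (2 * D2) = (∫ ω, 1 / b ω ∂μ)⁻¹ ∧
    (∫ ω, a ω / D ω ∂μ) / (2 * D2) = (∫ ω, 1 / a ω ∂μ)⁻¹ := by
  intro D D2
  have hbD : ∫ ω, b ω / D ω ∂μ = (∫ ω, 1 / a ω ∂μ) / 2 := by
    simpa [D] using integral_div_two_mul_mul_eq (μ := μ) (a := a)
      fun ω => (hε.trans_le (hb' ω).1).ne'
  have haD : ∫ ω, a ω / D ω ∂μ = (∫ ω, 1 / b ω ∂μ) / 2 := by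
    simpa [D, mul_comm] using integral_div_two_mul_mul_eq (μ := μ) (a := b) (b := a)
      fun ω => (hε.trans_le (ha' ω).1).ne'
  have hA := (integral_one_div_pos_of_le (μ := μ) ha hε fun ω => (ha' ω).1).ne'
  have hB := (integral_one_div_pos_of_le (μ := μ) hb hε fun ω => (hb' ω).1).ne'
  simp only [D2, hbD, haD, zero_div, integral_zero, zero_pow two_ne_zero, sub_zero]
  refine ⟨div_two_div_two_mul_div_two_mul_div_two hA, ?_⟩
  rw [mul_comm (_ / 2)]
  exact div_two_div_two_mul_div_two_mul_div_two hB

/-- For monoclinic layers with `c₂₃₁₃ ≡ 0` (so `D = 2(ab − 0²)`),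
the Backus equivalent-medium parameters `(b/D)‾/(2D₂)` and `(a/D)‾/(2D₂)` reduce
to the harmonic means `((1/b)‾)⁻¹` and `((1/a)‾)⁻¹`; hence the Backus and Gazis
(orthotropic) averages commute in this case. -/
theorem backus_gazis_commute_of_c2313_zero
    {Ω : Type*} [MeasurableSpace Ω] (μ : Measure Ω) [IsProbabilityMeasure μ]
    (a b : Ω → ℝ) (ha : Measurable a) (hb : Measurable b)
    (ε M : ℝ) (hε : 0 < ε) (hεM : ε ≤ M)
    (ha' : ∀ ω, ε ≤ a ω ∧ a ω ≤ M) (hb' : ∀ ω, ε ≤ b ω ∧ b ω ≤ M) :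
    let D : Ω → ℝ := fun ω => 2 * (a ω * b ω - 0 ^ 2)
    let D2 : ℝ := (∫ ω, b ω / D ω ∂μ) * (∫ ω, a ω / D ω ∂μ) -
      (∫ ω, (0 : ℝ) / D ω ∂μ) ^ 2
    (∫ ω, b ω / D ω ∂μ) / (2 * D2) = (∫ ω, 1 / b ω ∂μ)⁻¹ ∧
    (∫ ω, a ω / D ω ∂μ) / (2 * D2) = (∫ ω, 1 / a ω ∂μ)⁻¹ :=
  backus_gazis_commute_of_c2313_zero_general μ a b ha hb ε M hε ha' hb'
end

section
/- Let μ be a probability measure on a measurable space Ω and denote f̄ = ∫_Ω f dμ. Let c₁₁₁₁, c₂₂₂₂, c₁₁₃₃, c₂₂₃₃, c₃₃₃₃ : Ω → ℝ be bounded measurable functions with c₃₃₃₃ ≥ ε for some ε > 0, and suppose c₁₁₃₃ = c₂₂₃₃ μ-almost everywhere. Then the counterclockwise (Gazis-then-Backus) and clockwise (Backus-then-Gazis) tetragonal c₁₁₁₁ parameters agree: ((c₁₁₁₁+c₂₂₂₂)/2 − ((c₁₁₃₃+c₂₂₃₃)/2)²/c₃₃₃₃)‾ + (((c₁₁₃₃+c₂₂₃₃)/(2c₃₃₃₃))‾)²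 · ((1/c₃₃₃₃)‾)⁻¹ = ((c₁₁₁₁+c₂₂₂₂)/2 − (c₁₁₃₃²+c₂₂₃₃²)/(2c₃₃₃₃))‾ + (1/2)·(((c₁₁₃₃/c₃₃₃₃)‾)² + ((c₂₂₃₃/c₃₃₃₃)‾)²) · ((1/c₃₃₃₃)‾)⁻¹. -/
open MeasureTheory

/-- For orthotropic layers with `c₁₁₃₃ = c₂₂₃₃` a.e., the
Gazis-then-Backus (counterclockwise) and Backus-then-Gazis (clockwise)
tetragonal `c₁₁₁₁` parameters agree. -/
theorem backus_gazis_tetra_commute_of_c1133_eq_c2233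
    {Ω : Type*} [MeasurableSpace Ω] (μ : Measure Ω) [IsProbabilityMeasure μ]
    (c1111 c2222 c1133 c2233 c3333 : Ω → ℝ)
    (h1111 : Measurable c1111) (h2222 : Measurable c2222)
    (h1133 : Measurable c1133) (h2233 : Measurable c2233)
    (h3333 : Measurable c3333)
    (hbd : ∃ M : ℝ, ∀ ω, |c1111 ω| ≤ M ∧ |c2222 ω| ≤ M ∧ |c1133 ω| ≤ M ∧
      |c2233 ω| ≤ M ∧ |c3333 ω| ≤ M)
    (ε : ℝ) (hε : 0 < ε) (h3333ε : ∀ ω, ε ≤ c3333 ω)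
    (heq : ∀ᵐ ω ∂μ, c1133 ω = c2233 ω) :
    (∫ ω, ((c1111 ω + c2222 ω) / 2 -
        ((c1133 ω + c2233 ω) / 2) ^ 2 / c3333 ω) ∂μ) +
      (∫ ω, (c1133 ω + c2233 ω) / (2 * c3333 ω) ∂μ) ^ 2 *
        (∫ ω, 1 / c3333 ω ∂μ)⁻¹ =
    (∫ ω, ((c1111 ω + c2222 ω) / 2 -
        (c1133 ω ^ 2 + c2233 ω ^ 2) / (2 * c3333 ω)) ∂μ) +
      (1 / 2) * ((∫ ω, c1133 ω / c3333 ω ∂μ) ^ 2 +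
        (∫ ω, c2233 ω / c3333 ω ∂μ) ^ 2) * (∫ ω, 1 / c3333 ω ∂μ)⁻¹ := by
  have hne : ∀ ω, c3333 ω ≠ 0 := fun ω => ne_of_gt (lt_of_lt_of_le hε (h3333ε ω))
  have h1 : (∫ ω, ((c1111 ω + c2222 ω) / 2 -
        ((c1133 ω + c2233 ω) / 2) ^ 2 / c3333 ω) ∂μ) =
      (∫ ω, ((c1111 ω + c2222 ω) / 2 -
        (c1133 ω ^ 2 + c2233 ω ^ 2) / (2 * c3333 ω)) ∂μ) := by
    refine integral_congr_ae ?_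
    filter_upwards [heq] with ω h
    rw [h]
    have hc := hne ω
    field_simp
    ring
  have h2 : (∫ ω, (c1133 ω + c2233 ω) / (2 * c3333 ω) ∂μ) =
      (∫ ω, c1133 ω / c3333 ω ∂μ) := by
    refine integral_congr_ae ?_
    filter_upwards [heq] with ω h
    rw [← h]
    have hc := hne ω
    field_simp
    ring
  have h3 : (∫ ω, c2233 ω / c3333 ω ∂μ) = (∫ ω, c1133 ω / c3333 ω ∂μ) := by
    refine integral_congr_ae ?_
    filter_upwards [heq] with ω h
    rw [h]
  rw [h1, h2, h3]
  ring
end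

section
/- There exist positive real numbers λ₁, λ₂, μ₁, μ₂ (Lamé parameters of two isotropic layers, with per-layer elasticity parameters c₁₁₁₁ = λ + 2μ, c₁₁₂₂ = λ, c₁₁₃₃ = λ, c₃₃₃₃ = λ + 2μ, c₂₃₂₃ = μ) such that, writing f̄ = (f₁+f₂)/2 for the two-layer Backus average, the Backus equivalent-medium parameters ⟨c₁₁₁₁⟩ = (λ+2μ − λ²/(λ+2μ))‾ + ((λ/(λ+2μ))‾)²·((1/(λ+2μ))‾)⁻¹, ⟨c₁₁₂₂⟩ = (λ − λ²/(λ+2μ))‾ + ((λ/(λ+2μ))‾)²·((1/(λ+2μ))‾)⁻¹, and ⟨c₂₃₂₃⟩ = ((1/μ)‾)⁻¹ satisfy ⟨c₁₁₁₁⟩ − ⟨c₁₁₂₂⟩ ≠ 2·⟨c₂₃₂₃⟩. Hence the Backus average of isotropic layers is in general transversely isotropic but not isotropic, so the Backus and Gazis averages do not commute for transversely isotropic (or isotropic) layers. -/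
/-- There exist two isotropic layers, with Lamé parameters
`(l₁, m₁)` and `(l₂, m₂)`, whose Backus equivalent-medium parameters violate the
isotropy condition `⟨c₁₁₁₁⟩ − ⟨c₁₁₂₂⟩ = 2⟨c₂₃₂₃⟩`: the Backus average of isotropic
layers is in general transversely isotropic but not isotropic, so the Backus and
Gazis averages do not commute for transversely isotropic (or isotropic) layers. -/
theorem backus_of_isotropic_not_isotropic :
    ∃ l₁ l₂ m₁ m₂ : ℝ, 0 < l₁ ∧ 0 < l₂ ∧ 0 < m₁ ∧ 0 < m₂ ∧
      (let c1111avg : ℝ :=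
        ((l₁ + 2 * m₁ - l₁ ^ 2 / (l₁ + 2 * m₁)) +
          (l₂ + 2 * m₂ - l₂ ^ 2 / (l₂ + 2 * m₂))) / 2 +
          ((l₁ / (l₁ + 2 * m₁) + l₂ / (l₂ + 2 * m₂)) / 2) ^ 2 *
            ((1 / (l₁ + 2 * m₁) + 1 / (l₂ + 2 * m₂)) / 2)⁻¹
       let c1122avg : ℝ :=
        ((l₁ - l₁ ^ 2 / (l₁ + 2 * m₁)) + (l₂ - l₂ ^ 2 / (l₂ + 2 * m₂))) / 2 +
          ((l₁ / (l₁ + 2 * m₁) + l₂ / (l₂ + 2 * m₂)) / 2) ^ 2 *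
            ((1 / (l₁ + 2 * m₁) + 1 / (l₂ + 2 * m₂)) / 2)⁻¹
       let c2323avg : ℝ := ((1 / m₁ + 1 / m₂) / 2)⁻¹
       c1111avg - c1122avg ≠ 2 * c2323avg) := by
  refine ⟨1, 1, 1, 2, by norm_num, by norm_num, by norm_num, by norm_num, ?_⟩
  norm_num
end
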